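/- Let n ≥ 1 and 0 ≤ k ≤ n−1, and let (n−k, 1^k) denote the hook partition of n with arm n−k and k parts equal to 1. For every partition μ of n, the entry (Q(n)^{-1})_{μ,(n−k,1^k)} of the inverse quasi-Kostka matrix is 0 unless μ = (n−k, 1^k), in which case it equals 1. -/

import Mathlib

/-- A semistandard Young tableau (French notation) of shape given by the list `l` of row
lengths (row `0` is the bottom row).  Entries are positive integers; rows weakly increase
from left to right and columns strictly increase from bottom to top (entries outside the
shape are recorded as `0`). -/
structure SSYT (l : List ℕ) where
  entry : ℕ → ℕ → ℕ
  pos : ∀ i j, j < l.getD i 0 → 1 ≤ entry i j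
  zeros : ∀ i j, ¬ j < l.getD i 0 → entry i j = 0
  rowWeak : ∀ i j1 j2, j1 ≤ j2 → j2 < l.getD i 0 → entry i j1 ≤ entry i j2
  colStrict : ∀ i1 i2 j, i1 < i2 → j < l.getD i2 0 → entry i1 j < entry i2 j

/-- The cells of the Young diagram of `l`. -/
def cellsOf (l : List ℕ) : Finset (ℕ × ℕ) :=
  (Finset.range l.length).biUnion fun i =>
    (Finset.range (l.getD i 0)).image fun j => (i, j)

/-- The number of entries of `T` equal to `k`. -/
def wtOf {l : List ℕ} (T : SSYT l) (k : ℕ) : ℕ :=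
  ((cellsOf l).filter fun c => T.entry c.1 c.2 = k).card

/-- A tableau is quasi-Yamanouchi if whenever a value `k > 1` appears, some entry equal
to `k` lies in a strictly higher row than some entry equal to `k - 1`. -/
def IsQYT {l : List ℕ} (T : SSYT l) : Prop :=
  ∀ k, 2 ≤ k → (∃ c ∈ cellsOf l, T.entry c.1 c.2 = k) →
    ∃ c ∈ cellsOf l, ∃ c' ∈ cellsOf l,
      T.entry c.1 c.2 = k ∧ T.entry c'.1 c'.2 = k - 1 ∧ c'.1 < c.1

/-- `QK l α` : the number of quasi-Yamanouchi tableaux of shape `l` and weight `α`. -/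
noncomputable def QK (l α : List ℕ) : ℕ :=
  Set.ncard {T : SSYT l | IsQYT T ∧ ∀ i, wtOf T (i + 1) = α.getD i 0}

/-- `l` is (the list of parts of) a partition of `n`. -/
def IsPartitionOf (n : ℕ) (l : List ℕ) : Prop :=
  l.Pairwise (· ≥ ·) ∧ (∀ x ∈ l, 0 < x) ∧ l.sum = n

/-- `l` is (the list of parts of) a composition of `n`. -/
def IsCompositionOf (n : ℕ) (l : List ℕ) : Prop :=
  (∀ x ∈ l, 0 < x) ∧ l.sum = n

instance (n : ℕ) : DecidableEq (Composition n) := fun a b =>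
  decidable_of_iff (a.blocks = b.blocks) (by
    constructor
    · intro h; ext1; exact h
    · intro h; rw [h])

/-- The partitions of `n`, realized as compositions of `n` with weakly decreasing parts. -/
abbrev PartitionList (n : ℕ) := {c : Composition n // c.blocks.Pairwise (· ≥ ·)}

/-!
In a quasi-Yamanouchi tableau of partition shape in which every value `m ≥ 2` occurs at most
once, the value `m` must sit in row `m - 1`: it lies strictly above a copy of `m - 1`, which by
induction sits in row `m - 2`, while column strictness forces every entry of row `i` to be at
least `i + 1`. So each row `i` is filled with `i + 1`, the shape equals the weight, and the
tableau is unique. For a hook weight `(a, 1^k)` this makes the hook column of the quasi-Kostka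
matrix the unit vector at the hook, and so is the corresponding column of its inverse.
-/

lemma mem_cellsOf {l : List ℕ} {c : ℕ × ℕ} : c ∈ cellsOf l ↔ c.2 < l.getD c.1 0 := by
  obtain ⟨i, j⟩ := c
  simp only [cellsOf, Finset.mem_biUnion, Finset.mem_range, Finset.mem_image, Prod.mk.injEq]
  constructor
  · rintro ⟨i, -, j, hj, rfl, rfl⟩
    exact hj
  · intro h
    refine ⟨i, ?_, j, h, rfl, rfl⟩
    by_contra hi
    rw [List.getD_eq_default l 0 (not_lt.1 hi)] at h
    exact Nat.not_lt_zero j h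

lemma card_filter_fst_cellsOf (l : List ℕ) (i : ℕ) :
    ((cellsOf l).filter fun c => c.1 = i).card = l.getD i 0 := by
  have : ((cellsOf l).filter fun c => c.1 = i) = (Finset.range (l.getD i 0)).image (i, ·) := by
    ext ⟨i', j⟩
    simp only [Finset.mem_filter, mem_cellsOf, Finset.mem_image, Finset.mem_range, Prod.mk.injEq]
    constructor
    · rintro ⟨hj, rfl⟩
      exact ⟨j, hj, rfl, rfl⟩
    · rintro ⟨j, hj, rfl, rfl⟩
      exact ⟨hj, rfl⟩
  rw [this, Finset.card_image_of_injective _ (Prod.mk_right_injective i), Finset.card_range]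

lemma List.getD_antitone_of_pairwise_ge {l : List ℕ} (hl : l.Pairwise (· ≥ ·)) :
    Antitone fun i => l.getD i 0 := by
  intro i i' h
  dsimp only
  by_cases hi' : i' < l.length
  · have hi : i < l.length := lt_of_le_of_lt h hi'
    simp only [List.getD_eq_getElem?_getD, List.getElem?_eq_getElem hi',
      List.getElem?_eq_getElem hi]
    exact hl.rel_get_of_le h
  · rw [List.getD_eq_default l 0 (not_lt.1 hi')]
    exact Nat.zero_le _

lemma List.eq_of_getD_eq_of_pos :
    ∀ {l m : List ℕ}, (∀ x ∈ l, 0 < x) → (∀ x ∈ m, 0 < x) →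
      (∀ i, l.getD i 0 = m.getD i 0) → l = m
  | [], [], _, _, _ => rfl
  | [], y :: _, _, hm, h => absurd (h 0) (by simpa using (hm y (by simp)).ne)
  | x :: _, [], hl, _, h => absurd (h 0) (by simpa using (hl x (by simp)).ne')
  | x :: xs, y :: ys, hl, hm, h => by
    have hxy : x = y := by simpa using h 0
    have hxys : xs = ys := List.eq_of_getD_eq_of_pos
      (fun a ha => hl a (List.mem_cons_of_mem x ha)) (fun a ha => hm a (List.mem_cons_of_mem y ha))
      (fun i => by simpa using h (i + 1))
    rw [hxy, hxys]

namespace SSYT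

variable {l : List ℕ}

lemma ext_of_cellsOf {T T' : SSYT l}
    (h : ∀ c ∈ cellsOf l, T.entry c.1 c.2 = T'.entry c.1 c.2) : T = T' := by
  obtain ⟨e, _, he, _, _⟩ := T
  obtain ⟨e', _, he', _, _⟩ := T'
  congr
  funext i j
  by_cases hj : j < l.getD i 0
  · exact h (i, j) (mem_cellsOf.2 hj)
  · rw [he i j hj, he' i j hj]

lemma row_add_one_le_entry (hl : l.Pairwise (· ≥ ·)) (T : SSYT l) :
    ∀ c ∈ cellsOf l, c.1 + 1 ≤ T.entry c.1 c.2 := by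
  rintro ⟨i, j⟩ hc
  replace hc : j < l.getD i 0 := mem_cellsOf.1 hc
  induction i with
  | zero => exact T.pos 0 j hc
  | succ i ih =>
    have hc' := lt_of_lt_of_le hc (List.getD_antitone_of_pairwise_ge hl i.le_succ)
    exact lt_of_le_of_lt (ih hc') (T.colStrict i (i + 1) j i.lt_succ_self hc)

lemma wtOf_add_one_of_entry_eq {T : SSYT l}
    (hT : ∀ c ∈ cellsOf l, T.entry c.1 c.2 = c.1 + 1) (i : ℕ) :
    wtOf T (i + 1) = l.getD i 0 := by
  rw [wtOf, ← card_filter_fst_cellsOf l i]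
  congr 1
  refine Finset.filter_congr fun c hc => ?_
  rw [hT c hc, Nat.add_right_cancel_iff]

def superstandard (hl : l.Pairwise (· ≥ ·)) : SSYT l where
  entry i j := if j < l.getD i 0 then i + 1 else 0
  pos i j h := by rw [if_pos h]; omega
  zeros i j h := if_neg h
  rowWeak i j₁ j₂ h₁₂ h₂ := by rw [if_pos (lt_of_le_of_lt h₁₂ h₂), if_pos h₂]
  colStrict i₁ i₂ j h₁₂ h₂ := by
    rw [if_pos h₂, if_pos (lt_of_lt_of_le h₂ (List.getD_antitone_of_pairwise_ge hl h₁₂.le))]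
    omega

lemma superstandard_entry (hl : l.Pairwise (· ≥ ·)) :
    ∀ c ∈ cellsOf l, (superstandard hl).entry c.1 c.2 = c.1 + 1 :=
  fun _ hc => if_pos (mem_cellsOf.1 hc)

lemma isQYT_superstandard (hl : l.Pairwise (· ≥ ·)) : IsQYT (superstandard hl) := by
  rintro m hm ⟨c, hc, rfl⟩
  rw [superstandard_entry hl c hc] at hm ⊢
  have hbelow : (c.1 - 1, 0) ∈ cellsOf l := mem_cellsOf.2 <|
    lt_of_le_of_lt (Nat.zero_le _) <| lt_of_lt_of_le (mem_cellsOf.1 hc)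
      (List.getD_antitone_of_pairwise_ge hl (Nat.sub_le c.1 1))
  refine ⟨c, hc, _, hbelow, superstandard_entry hl c hc, ?_, ?_⟩
  · rw [superstandard_entry hl _ hbelow]
    omega
  · dsimp only
    omega

theorem entry_eq_row_add_one_of_isQYT (hl : l.Pairwise (· ≥ ·)) {T : SSYT l} (hT : IsQYT T)
    (hunique : ∀ m, 2 ≤ m → ∀ c ∈ cellsOf l, ∀ d ∈ cellsOf l,
      T.entry c.1 c.2 = m → T.entry d.1 d.2 = m → c = d) :
    ∀ c ∈ cellsOf l, T.entry c.1 c.2 = c.1 + 1 := by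
  suffices h : ∀ m, ∀ c ∈ cellsOf l, T.entry c.1 c.2 = m → c.1 + 1 = m from
    fun c hc => (h _ c hc rfl).symm
  intro m
  induction m using Nat.strong_induction_on with
  | _ m ih =>
    intro c hc hcm
    have hlow := row_add_one_le_entry hl T c hc
    by_cases hm : 2 ≤ m
    · obtain ⟨d, hd, d', hd', hdm, hd'm, hrow⟩ := hT m hm ⟨c, hc, hcm⟩
      have hcd : c = d := hunique m hm c hc d hd hcm hdm
      have hd'row : d'.1 + 1 = m - 1 := ih (m - 1) (by omega) d' hd' hd'm
      subst hcd
      omega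
    · have := T.pos c.1 c.2 (mem_cellsOf.1 hc)
      omega

end SSYT

open SSYT in
theorem QK_hook (l : List ℕ) (hl : l.Pairwise (· ≥ ·)) (hpos : ∀ x ∈ l, 0 < x)
    {a : ℕ} (ha : 0 < a) (k : ℕ) :
    QK l (a :: List.replicate k 1) = if l = a :: List.replicate k 1 then 1 else 0 := by
  set α := a :: List.replicate k 1
  set S := {T : SSYT l | IsQYT T ∧ ∀ i, wtOf T (i + 1) = α.getD i 0}
  have hentry : ∀ T ∈ S, ∀ c ∈ cellsOf l, T.entry c.1 c.2 = c.1 + 1 := by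
    rintro T ⟨hT, hw⟩
    refine entry_eq_row_add_one_of_isQYT hl hT fun m hm c hc d hd hcm hdm => ?_
    have hwt : wtOf T m ≤ 1 := by
      obtain ⟨i, rfl⟩ : ∃ i, m = i + 1 + 1 := ⟨m - 2, by omega⟩
      rw [hw, List.getD_cons_succ, List.getD_eq_getElem?_getD, List.getElem?_replicate]
      split_ifs <;> simp
    exact Finset.card_le_one.1 hwt c (Finset.mem_filter.2 ⟨hc, hcm⟩) d
      (Finset.mem_filter.2 ⟨hd, hdm⟩)
  have hshape : ∀ T ∈ S, l = α := fun T hTS =>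
    List.eq_of_getD_eq_of_pos hpos (by simp [α, ha]) fun i => by
      rw [← wtOf_add_one_of_entry_eq (hentry T hTS) i]
      exact hTS.2 i
  split_ifs with hlα
  · have : S = {superstandard hl} := by
      refine Set.eq_singleton_iff_unique_mem.2 ⟨⟨isQYT_superstandard hl, fun i => ?_⟩, ?_⟩
      · rw [wtOf_add_one_of_entry_eq (superstandard_entry hl), hlα]
      · intro T hTS
        exact ext_of_cellsOf fun c hc => by rw [hentry T hTS c hc, superstandard_entry hl c hc]
    change S.ncard = 1
    rw [this, Set.ncard_singleton]
  · change S.ncard = 0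
    rw [Set.eq_empty_of_forall_notMem fun T hTS => hlα (hshape T hTS), Set.ncard_empty]

theorem inverse_quasiKostka_hook_column_general (n k : ℕ)
    (Q Qinv : Matrix (PartitionList n) (PartitionList n) ℤ)
    (hQ : ∀ p q : PartitionList n, Q p q = QK p.1.blocks q.1.blocks)
    (h2 : Qinv * Q = 1)
    (hook : PartitionList n)
    (hhook : hook.1.blocks = (n - k) :: List.replicate k 1) :
    ∀ μ : PartitionList n,
      (μ ≠ hook → Qinv μ hook = 0) ∧ (μ = hook → Qinv μ hook = 1) := by
  have harm : 0 < n - k := hook.1.blocks_pos (hhook ▸ List.mem_cons_self ..)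
  have hcol : ∀ p, Q p hook = (1 : Matrix (PartitionList n) (PartitionList n) ℤ) p hook := by
    intro p
    have hblocks : p.1.blocks = hook.1.blocks ↔ p = hook := by
      rw [Subtype.ext_iff, Composition.ext_iff]
    rw [hQ, hhook, QK_hook _ p.2 (fun _ => p.1.blocks_pos) harm, ← hhook, Matrix.one_apply]
    simp only [hblocks, Nat.cast_ite, Nat.cast_one, Nat.cast_zero]
  have hinv : ∀ μ, Qinv μ hook = (1 : Matrix (PartitionList n) (PartitionList n) ℤ) μ hook :=
    fun μ => calc
      Qinv μ hook = (Qinv * 1 : Matrix _ _ ℤ) μ hook := by rw [Matrix.mul_one]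
      _ = (Qinv * Q) μ hook := by simp only [Matrix.mul_apply, hcol]
      _ = (1 : Matrix _ _ ℤ) μ hook := by rw [h2]
  intro μ
  exact ⟨fun h => (hinv μ).trans (Matrix.one_apply_ne h),
    fun h => (hinv μ).trans (h ▸ Matrix.one_apply_eq μ)⟩

/-- Let n ≥ 1 and 0 ≤ k ≤ n−1, and let (n−k, 1^k) be the hook partition
of n.  For every partition μ of n, the entry of the inverse quasi-Kostka matrix in row μ
and column (n−k,1^k) is 0 unless μ = (n−k,1^k), in which case it is 1. -/
theorem inverse_quasiKostka_hook_column (n k : ℕ) (hn : 1 ≤ n) (hk : k ≤ n - 1)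
    (Q Qinv : Matrix (PartitionList n) (PartitionList n) ℤ)
    (hQ : ∀ p q : PartitionList n, Q p q = QK p.1.blocks q.1.blocks)
    (h1 : Q * Qinv = 1) (h2 : Qinv * Q = 1)
    (hook : PartitionList n)
    (hhook : hook.1.blocks = (n - k) :: List.replicate k 1) :
    ∀ μ : PartitionList n,
      (μ ≠ hook → Qinv μ hook = 0) ∧ (μ = hook → Qinv μ hook = 1) :=
  inverse_quasiKostka_hook_column_general n k Q Qinv hQ h2 hook hhook
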